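/- For an integrable random variable W with continuous strictly increasing CDF and any α ∈ (0,1), the expected shortfall ES_α = (1/α) E[W · 1_{W ≤ W*_α}], where W*_α is the α-quantile of W, satisfies ES_α = sup_{w ∈ ℝ} ( w + (1/α) E[min(W - w, 0)] ), and the supremum is attained at w = W*_α. -/

import Mathlib

open MeasureTheory Set

/-! Pointwise `min (W - w) 0 ≤ (W - w) · 1_{W ≤ q}`, with equality at `w = q`. Integrating gives
`w α + E[min (W - w) 0] ≤ ∫_{W ≤ q} W` with equality at `w = q`, where `α = P(W ≤ q)`;
dividing by `α` gives both claims. -/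

section Pointwise

variable {Ω : Type*} (W : Ω → ℝ)

lemma min_sub_zero_le_indicator (w q : ℝ) (ω : Ω) :
    min (W ω - w) 0 ≤ {ω | W ω ≤ q}.indicator (fun ω => W ω - w) ω := by
  by_cases h : W ω ≤ q <;> simp [h]

lemma min_sub_zero_eq_indicator (q : ℝ) :
    (fun ω => min (W ω - q) 0) = {ω | W ω ≤ q}.indicator (fun ω => W ω - q) := by
  ext ω
  by_cases h : W ω ≤ q
  · simp [h]
  · simp [h, (not_le.1 h).le]

end Pointwise

section Integral

variable {Ω : Type*} [MeasurableSpace Ω] {μ : Measure Ω} [IsFiniteMeasure μ] {W : Ω → ℝ}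

lemma MeasureTheory.Integrable.min_sub_const_zero (hW : Integrable W μ) (w : ℝ) :
    Integrable (fun ω => min (W ω - w) 0) μ :=
  (hW.sub (integrable_const w)).inf (integrable_zero Ω ℝ μ)

lemma integral_indicator_setOf_le_sub_const (hW : Integrable W μ) (w q : ℝ) :
    ∫ ω, {ω | W ω ≤ q}.indicator (fun ω => W ω - w) ω ∂μ
      = ∫ ω in {ω | W ω ≤ q}, W ω ∂μ - w * μ.real {ω | W ω ≤ q} := by
  rw [integral_indicator₀ (nullMeasurableSet_le hW.aemeasurable aemeasurable_const),
    integral_sub hW.integrableOn (integrable_const w), setIntegral_const, smul_eq_mul, mul_comm]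

lemma integral_min_sub_zero_add_le (hW : Integrable W μ) (w q : ℝ) :
    w * μ.real {ω | W ω ≤ q} + ∫ ω, min (W ω - w) 0 ∂μ ≤ ∫ ω in {ω | W ω ≤ q}, W ω ∂μ := by
  have hle : ∫ ω, min (W ω - w) 0 ∂μ ≤ ∫ ω, {ω | W ω ≤ q}.indicator (fun ω => W ω - w) ω ∂μ :=
    integral_mono (hW.min_sub_const_zero w)
      ((hW.sub (integrable_const w)).indicator₀
        (nullMeasurableSet_le hW.aemeasurable aemeasurable_const))
      (min_sub_zero_le_indicator W w q)
  rw [integral_indicator_setOf_le_sub_const hW] at hle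
  linarith

lemma integral_min_sub_zero_add_eq (hW : Integrable W μ) (q : ℝ) :
    q * μ.real {ω | W ω ≤ q} + ∫ ω, min (W ω - q) 0 ∂μ = ∫ ω in {ω | W ω ≤ q}, W ω ∂μ := by
  rw [min_sub_zero_eq_indicator, integral_indicator_setOf_le_sub_const hW]
  ring

end Integral

theorem expected_shortfall_rockafellar_uryasev_general
    {Ω : Type*} [MeasurableSpace Ω] (μ : Measure Ω) [IsProbabilityMeasure μ]
    (W : Ω → ℝ) (hW : Integrable W μ) (α : ℝ) (hα0 : 0 < α)
    (q : ℝ) (hq : (μ {ω | W ω ≤ q}).toReal = α) :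
    (∀ w : ℝ,
      w + (1 / α) * ∫ ω, min (W ω - w) 0 ∂μ ≤ (1 / α) * ∫ ω in {ω | W ω ≤ q}, W ω ∂μ) ∧
    q + (1 / α) * ∫ ω, min (W ω - q) 0 ∂μ = (1 / α) * ∫ ω in {ω | W ω ≤ q}, W ω ∂μ := by
  rw [← measureReal_def] at hq
  have hscale (w : ℝ) : w + (1 / α) * ∫ ω, min (W ω - w) 0 ∂μ
      = (1 / α) * (w * μ.real {ω | W ω ≤ q} + ∫ ω, min (W ω - w) 0 ∂μ) := by
    rw [hq]
    field_simp
  refine ⟨fun w => ?_, ?_⟩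
  · rw [hscale]
    gcongr
    exact integral_min_sub_zero_add_le hW w q
  · rw [hscale, integral_min_sub_zero_add_eq hW]

/-- Rockafellar–Uryasev representation: for an integrable random variable `W` with
continuous strictly increasing CDF and `α ∈ (0,1)`, the expected shortfall
`ES_α = (1/α) E[W · 1_{W ≤ W*_α}]`, where `W*_α` is the `α`-quantile, satisfies
`ES_α = sup_w (w + (1/α) E[min (W - w) 0])`, with the supremum attained at `w = W*_α`. -/
theorem expected_shortfall_rockafellar_uryasev
    {Ω : Type*} [MeasurableSpace Ω] (μ : Measure Ω) [IsProbabilityMeasure μ]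
    (W : Ω → ℝ) (hW : Integrable W μ) (α : ℝ) (hα0 : 0 < α) (hα1 : α < 1)
    (hcdf_cont : Continuous fun x : ℝ => (μ {ω | W ω ≤ x}).toReal)
    (hcdf_mono : StrictMono fun x : ℝ => (μ {ω | W ω ≤ x}).toReal)
    (q : ℝ) (hq : (μ {ω | W ω ≤ q}).toReal = α) :
    (∀ w : ℝ,
      w + (1 / α) * ∫ ω, min (W ω - w) 0 ∂μ ≤ (1 / α) * ∫ ω in {ω | W ω ≤ q}, W ω ∂μ) ∧
    q + (1 / α) * ∫ ω, min (W ω - q) 0 ∂μ = (1 / α) * ∫ ω in {ω | W ω ≤ q}, W ω ∂μ :=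
  expected_shortfall_rockafellar_uryasev_general μ W hW α hα0 q hq
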